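/- For every n ≥ 1 there exists a nonnegative function f_n ∈ L¹(S^d) with ‖f_n‖₁ = 1 such that for every α > 1 and every y ∈ D_{n,α}, the Poisson integral satisfies P[f_n]((1 - 2^{-n})·y) ≥ (C/n)·2^{(n - N_{n,α})d}, where N_{n,α} = ⌊n/α⌋ + 1 and C > 0 depends only on d. -/

import Mathlib

open Metric Set MeasureTheory Filter

/-- The Poisson kernel on the unit ball of `ℝ^{d+1}`. -/
noncomputable def poissonKernelSphere (d : ℕ) (x ξ : EuclideanSpace ℝ (Fin (d + 1))) : ℝ :=
  (1 - ‖x‖ ^ 2) / ‖x - ξ‖ ^ (d + 1)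

/-- The normalized surface measure on the unit sphere of `ℝ^{d+1}`. -/
noncomputable def sphereMeasure (d : ℕ) :
    Measure (sphere (0 : EuclideanSpace ℝ (Fin (d + 1))) 1) :=
  ((volume : Measure (EuclideanSpace ℝ (Fin (d + 1)))).toSphere Set.univ)⁻¹ •
    (volume : Measure (EuclideanSpace ℝ (Fin (d + 1)))).toSphere

/-! Let `f` be the average, over the scales `1 ≤ N ≤ n` and the points `x ∈ R N`, of the
normalized indicators of the caps `κ(x, 2⁻ⁿ)`. If `y` is `2⁻ⁿ`-close to some `x ∈ R N`, the term
of `(N, x)` carries weight `1 / (n · #R N) ≥ 1 / (n C₁ 2^{N d})`. Every point of its cap lies within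
`3 · 2⁻ⁿ` of `(1 - 2⁻ⁿ) y`, whose distance to the sphere is `2⁻ⁿ`, so there the Poisson kernel is at
least `2⁻ⁿ / (3 · 2⁻ⁿ)^{d+1} = 2^{n d} / 3^{d+1}`. Hence `C = 1 / (3^{d+1} C₁)` works. -/

section ProbDensity

open Finset
open scoped BigOperators

variable {α ι : Type*} [MeasurableSpace α] {μ : Measure α}

structure IsProbDensity (μ : Measure α) (f : α → ℝ) : Prop where
  integrable : Integrable f μ
  nonneg : ∀ a, 0 ≤ f a
  integral_eq_one : ∫ a, f a ∂μ = 1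

noncomputable def normalizedIndicator (μ : Measure α) (s : Set α) : α → ℝ :=
  s.indicator fun _ => (μ.real s)⁻¹

theorem isProbDensity_normalizedIndicator [IsFiniteMeasure μ] {s : Set α}
    (hs : MeasurableSet s) (hμs : μ s ≠ 0) : IsProbDensity μ (normalizedIndicator μ s) where
  integrable := (integrable_const _).indicator hs
  nonneg _ := indicator_nonneg (fun _ _ => inv_nonneg.2 measureReal_nonneg) _
  integral_eq_one := by
    rw [normalizedIndicator, integral_indicator_const _ hs, smul_eq_mul,
      mul_inv_cancel₀ ((measureReal_ne_zero_iff (measure_ne_top μ s)).2 hμs)]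

theorem IsProbDensity.expect {S : Finset ι} {ρ : ι → α → ℝ} (hS : S.Nonempty)
    (h : ∀ i ∈ S, IsProbDensity μ (ρ i)) : IsProbDensity μ fun a => 𝔼 i ∈ S, ρ i a where
  integrable := by
    simp only [expect_eq_sum_div_card]
    exact (integrable_finsetSum _ fun i hi => (h i hi).integrable).div_const _
  nonneg a := expect_nonneg fun i hi => (h i hi).nonneg a
  integral_eq_one := by
    simp only [expect_eq_sum_div_card]
    rw [integral_div, integral_finsetSum _ fun i hi => (h i hi).integrable,
      sum_congr rfl fun i hi => (h i hi).integral_eq_one, sum_const, nsmul_one,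
      div_self (Nat.cast_ne_zero.2 hS.card_pos.ne')]

theorem div_card_le_expect {S : Finset ι} {f : ι → ℝ} (hf : ∀ i ∈ S, 0 ≤ f i) {j : ι}
    (hj : j ∈ S) : f j / S.card ≤ 𝔼 i ∈ S, f i := by
  rw [expect_eq_sum_div_card]
  exact div_le_div_of_nonneg_right (single_le_sum hf hj) (Nat.cast_nonneg _)

theorem le_integral_mul_of_le_normalizedIndicator [IsFiniteMeasure μ] {f g : α → ℝ}
    {s : Set α} {c w : ℝ} (hs : MeasurableSet s) (hμs : μ s ≠ 0) (hw : 0 ≤ w)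
    (hf : ∀ a, w * normalizedIndicator μ s a ≤ f a) (hg : ∀ a, 0 ≤ g a)
    (hgc : ∀ a ∈ s, c ≤ g a) (hgf : Integrable (fun a => g a * f a) μ) :
    c * w ≤ ∫ a, g a * f a ∂μ := by
  have hρ := isProbDensity_normalizedIndicator hs hμs
  calc c * w = ∫ a, c * (w * normalizedIndicator μ s a) ∂μ := by
        rw [integral_const_mul, integral_const_mul, hρ.integral_eq_one, mul_one]
    _ ≤ ∫ a, g a * f a ∂μ := by
        refine integral_mono ((hρ.integrable.const_mul w).const_mul c) hgf fun a => ?_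
        by_cases ha : a ∈ s
        · exact mul_le_mul (hgc a ha) (hf a) (mul_nonneg hw (hρ.nonneg a)) (hg a)
        · have hf0 : 0 ≤ f a := by simpa [normalizedIndicator, ha] using hf a
          simpa [normalizedIndicator, ha] using mul_nonneg (hg a) hf0

end ProbDensity

section NetCaps

open Finset
open scoped BigOperators

variable {X : Type*} [PseudoMetricSpace X] [MeasurableSpace X] {μ : Measure X}

noncomputable def netCapDensity (μ : Measure X) (R : ℕ → Finset X) (n : ℕ) (δ : ℝ) : X → ℝ :=
  fun ξ => 𝔼 N ∈ Finset.Icc 1 n, 𝔼 x ∈ R N, normalizedIndicator μ (ball x δ) ξ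

theorem isProbDensity_netCapDensity [OpensMeasurableSpace X] [IsFiniteMeasure μ]
    [μ.IsOpenPosMeasure]
    {R : ℕ → Finset X} (hR : ∀ N, (R N).Nonempty) {n : ℕ} (hn : 1 ≤ n) {δ : ℝ} (hδ : 0 < δ) :
    IsProbDensity μ (netCapDensity μ R n δ) :=
  IsProbDensity.expect (Finset.nonempty_Icc.2 hn) fun N _ => IsProbDensity.expect (hR N) fun x _ =>
    isProbDensity_normalizedIndicator measurableSet_ball (measure_ball_pos μ x hδ).ne'

theorem le_integral_mul_netCapDensity [OpensMeasurableSpace X] [IsFiniteMeasure μ]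
    [μ.IsOpenPosMeasure]
    {R : ℕ → Finset X} {n N : ℕ} (hN : N ∈ Finset.Icc 1 n) {x : X} (hx : x ∈ R N) {δ c : ℝ}
    (hδ : 0 < δ) {g : X → ℝ} (hg : ∀ ξ, 0 ≤ g ξ) (hgc : ∀ ξ ∈ ball x δ, c ≤ g ξ)
    (hgf : Integrable (fun ξ => g ξ * netCapDensity μ R n δ ξ) μ) :
    c * ((n : ℝ) * #(R N))⁻¹ ≤ ∫ ξ, g ξ * netCapDensity μ R n δ ξ ∂μ := by
  have hρ : ∀ y : X, IsProbDensity μ (normalizedIndicator μ (ball y δ)) := fun y =>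
    isProbDensity_normalizedIndicator measurableSet_ball (measure_ball_pos μ y hδ).ne'
  refine le_integral_mul_of_le_normalizedIndicator measurableSet_ball
    (measure_ball_pos μ x hδ).ne' (by positivity) (fun ξ => ?_) hg hgc hgf
  have hn : #(Finset.Icc 1 n) = n := by simp
  calc ((n : ℝ) * #(R N))⁻¹ * normalizedIndicator μ (ball x δ) ξ
      = normalizedIndicator μ (ball x δ) ξ / #(R N) / #(Finset.Icc 1 n) := by
        rw [hn]; field_simp
    _ ≤ (𝔼 y ∈ R N, normalizedIndicator μ (ball y δ) ξ) / #(Finset.Icc 1 n) :=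
        div_le_div_of_nonneg_right
          (div_card_le_expect (fun y _ => (hρ y).nonneg ξ) hx) (Nat.cast_nonneg _)
    _ ≤ netCapDensity μ R n δ ξ :=
        div_card_le_expect (f := fun N => 𝔼 y ∈ R N, normalizedIndicator μ (ball y δ) ξ)
          (fun _ _ => expect_nonneg fun y _ => (hρ y).nonneg ξ) hN

end NetCaps

section SphereMeasure

variable {d : ℕ}

instance : IsProbabilityMeasure (sphereMeasure d) :=
  ⟨by rw [sphereMeasure, Measure.smul_apply, smul_eq_mul, ENNReal.inv_mul_cancel
    (Measure.measure_univ_ne_zero.2 (Measure.toSphere_ne_zero _)) (measure_ne_top _ _)]⟩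

instance : (sphereMeasure d).IsOpenPosMeasure :=
  Measure.isOpenPosMeasure_smul _ (ENNReal.inv_ne_zero.2 (measure_ne_top _ _))

end SphereMeasure

section PoissonKernel

variable {d : ℕ}

theorem poissonKernelSphere_nonneg {p : EuclideanSpace ℝ (Fin (d + 1))} (hp : ‖p‖ ≤ 1)
    (ξ : EuclideanSpace ℝ (Fin (d + 1))) : 0 ≤ poissonKernelSphere d p ξ :=
  div_nonneg (sub_nonneg.2 (pow_le_one₀ (norm_nonneg p) hp)) (by positivity)

theorem continuous_poissonKernelSphere {p : EuclideanSpace ℝ (Fin (d + 1))} (hp : ‖p‖ < 1) :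
    Continuous fun ξ : sphere (0 : EuclideanSpace ℝ (Fin (d + 1))) 1 =>
      poissonKernelSphere d p ξ := by
  refine continuous_const.div (by fun_prop) fun ξ => pow_ne_zero _ ?_
  have hξ : ‖(ξ : EuclideanSpace ℝ (Fin (d + 1)))‖ = 1 := norm_eq_of_mem_sphere ξ
  exact norm_ne_zero_iff.2 (sub_ne_zero.2 fun h => by rw [← h] at hξ; linarith)

theorem inv_le_poissonKernelSphere {x y ξ : EuclideanSpace ℝ (Fin (d + 1))} {δ : ℝ}
    (hy : ‖y‖ = 1) (hξ : ‖ξ‖ = 1) (hδ₀ : 0 < δ) (hδ₁ : δ ≤ 1) (hyx : ‖y - x‖ < δ)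
    (hξx : ‖ξ - x‖ < δ) :
    (3 ^ (d + 1) * δ ^ d)⁻¹ ≤ poissonKernelSphere d ((1 - δ) • y) ξ := by
  set p := (1 - δ) • y
  have hp : ‖p‖ = 1 - δ := by
    rw [norm_smul, hy, mul_one, Real.norm_of_nonneg (sub_nonneg.2 hδ₁)]
  have hpy : ‖p - y‖ = δ := by
    rw [show p - y = (-δ) • y by simp only [p]; module, norm_smul, hy, mul_one, norm_neg,
      Real.norm_of_nonneg hδ₀.le]
  have hpξ_lower : δ ≤ ‖p - ξ‖ := by
    have := norm_sub_norm_le ξ p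
    rw [norm_sub_rev] at this
    linarith
  have hpξ_upper : ‖p - ξ‖ ≤ 3 * δ :=
    calc ‖p - ξ‖ ≤ ‖p - y‖ + ‖y - x‖ + ‖x - ξ‖ := by
          linarith [norm_sub_le_norm_sub_add_norm_sub p y ξ,
            norm_sub_le_norm_sub_add_norm_sub y x ξ]
      _ ≤ 3 * δ := by rw [hpy, norm_sub_rev x]; linarith
  calc (3 ^ (d + 1) * δ ^ d)⁻¹ = δ / (3 * δ) ^ (d + 1) := by
        field_simp; ring
    _ ≤ (1 - ‖p‖ ^ 2) / ‖p - ξ‖ ^ (d + 1) := by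
        have hnum : δ ≤ 1 - ‖p‖ ^ 2 := by rw [hp]; nlinarith
        exact div_le_div₀ (hδ₀.le.trans hnum) hnum (pow_pos (hδ₀.trans_le hpξ_lower) _)
          (pow_le_pow_left₀ (norm_nonneg _) hpξ_upper _)

end PoissonKernel

theorem MeasureTheory.Integrable.continuous_mul {X : Type*} [TopologicalSpace X] [CompactSpace X]
    [MeasurableSpace X] [OpensMeasurableSpace X] {μ : Measure X} {f g : X → ℝ}
    (hf : Integrable f μ) (hg : Continuous g) : Integrable (fun x => g x * f x) μ := by
  obtain ⟨C, hC⟩ := isCompact_univ.exists_bound_of_continuousOn hg.continuousOn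
  exact hf.bdd_mul hg.aestronglyMeasurable (ae_of_all _ fun x => hC x trivial)

theorem inv_div_mul_two_rpow_le {d n N : ℕ} {C₁ k : ℝ} (hn : 1 ≤ n) (hk : 0 < k)
    (hkC : k ≤ C₁ * 2 ^ (N * d)) :
    (3 ^ (d + 1) * C₁)⁻¹ / n * (2 : ℝ) ^ (((n : ℝ) - N) * d) ≤
      (3 ^ (d + 1) * ((2 : ℝ) ^ (-(n : ℝ))) ^ d)⁻¹ * ((n : ℝ) * k)⁻¹ := by
  have hn' : (0 : ℝ) < n := by exact_mod_cast hn
  rw [sub_mul, Real.rpow_sub zero_lt_two, ← Nat.cast_mul, ← Nat.cast_mul, Real.rpow_natCast,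
    Real.rpow_natCast, Real.rpow_neg zero_le_two, Real.rpow_natCast, inv_pow, ← pow_mul]
  calc (3 ^ (d + 1) * C₁)⁻¹ / n * ((2 : ℝ) ^ (n * d) / 2 ^ (N * d))
      = (3 ^ (d + 1) * ((2 : ℝ) ^ (n * d))⁻¹)⁻¹ * ((n : ℝ) * (C₁ * 2 ^ (N * d)))⁻¹ := by
        field_simp
    _ ≤ (3 ^ (d + 1) * ((2 : ℝ) ^ (n * d))⁻¹)⁻¹ * ((n : ℝ) * k)⁻¹ := by
        gcongr

theorem floor_div_add_one_le {n : ℕ} (hn : 1 ≤ n) {α : ℝ} (hα : 1 < α) :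
    ⌊(n : ℝ) / α⌋₊ + 1 ≤ n := by
  have hn' : (0 : ℝ) < n := by exact_mod_cast hn
  have : ⌊(n : ℝ) / α⌋₊ < n :=
    (Nat.floor_lt (by positivity)).2 (div_lt_self hn' hα)
  omega

theorem exists_saturating_function_general (d : ℕ) (C₁ : ℝ)
    (R : ℕ → Finset (sphere (0 : EuclideanSpace ℝ (Fin (d + 1))) 1))
    (hcover : ∀ N : ℕ, ∀ ξ : sphere (0 : EuclideanSpace ℝ (Fin (d + 1))) 1,
      ∃ x ∈ R N, ‖(ξ : EuclideanSpace ℝ (Fin (d + 1))) - x‖ < 2 ^ (-(N : ℝ)))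
    (hcard : ∀ N : ℕ, ((R N).card : ℝ) ≤ C₁ * 2 ^ (N * d)) :
    ∃ C : ℝ, 0 < C ∧
      ∀ n : ℕ, 1 ≤ n →
        ∃ f : sphere (0 : EuclideanSpace ℝ (Fin (d + 1))) 1 → ℝ,
          Integrable f (sphereMeasure d) ∧ (∀ ξ, 0 ≤ f ξ) ∧
          (∫ ξ, f ξ ∂(sphereMeasure d)) = 1 ∧
          ∀ α : ℝ, 1 < α →
            ∀ y : sphere (0 : EuclideanSpace ℝ (Fin (d + 1))) 1,
              (∃ x ∈ R (⌊(n : ℝ) / α⌋₊ + 1),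
                ‖(y : EuclideanSpace ℝ (Fin (d + 1))) - x‖ < 2 ^ (-(n : ℝ))) →
              (C / n) * (2:ℝ) ^ (((n : ℝ) - (⌊(n : ℝ) / α⌋₊ + 1)) * d) ≤
                ∫ ξ, poissonKernelSphere d
                      ((1 - (2:ℝ) ^ (-(n : ℝ))) • (y : EuclideanSpace ℝ (Fin (d + 1)))) ξ * f ξ
                    ∂(sphereMeasure d) := by
  have hR : ∀ N, (R N).Nonempty := fun N =>
    let ⟨x, hx, _⟩ := hcover N ⟨EuclideanSpace.single 0 1, by simp⟩
    ⟨x, hx⟩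
  have hC₁ : 0 < C₁ := zero_lt_one.trans_le <| by
    simpa using (Nat.one_le_cast.2 (hR 0).card_pos).trans (hcard 0)
  refine ⟨(3 ^ (d + 1) * C₁)⁻¹, by positivity, fun n hn => ?_⟩
  set δ : ℝ := 2 ^ (-(n : ℝ))
  have hδ₀ : 0 < δ := by positivity
  have hδ₁ : δ ≤ 1 := Real.rpow_le_one_of_one_le_of_nonpos one_le_two (by simp)
  have hf := isProbDensity_netCapDensity (μ := sphereMeasure d) hR hn hδ₀
  refine ⟨_, hf.integrable, hf.nonneg, hf.integral_eq_one, fun α hα y ⟨x, hx, hyx⟩ => ?_⟩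
  set N := ⌊(n : ℝ) / α⌋₊ + 1
  have hN : N ∈ Finset.Icc 1 n := Finset.mem_Icc.2 ⟨by omega, floor_div_add_one_le hn hα⟩
  have hp : ‖(1 - δ) • (y : EuclideanSpace ℝ (Fin (d + 1)))‖ < 1 := by
    rw [norm_smul, norm_eq_of_mem_sphere y, mul_one, Real.norm_of_nonneg (by linarith)]
    linarith
  rw [← Nat.cast_succ]
  calc _ ≤ (3 ^ (d + 1) * δ ^ d)⁻¹ * ((n : ℝ) * (R N).card)⁻¹ :=
        inv_div_mul_two_rpow_le hn (Nat.cast_pos.2 (hR N).card_pos) (hcard N)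
    _ ≤ _ := le_integral_mul_netCapDensity hN hx hδ₀
        (g := fun ξ => poissonKernelSphere d ((1 - δ) • (y : EuclideanSpace ℝ (Fin (d + 1)))) ξ)
        (fun ξ => poissonKernelSphere_nonneg hp.le _)
        (fun ξ hξ => inv_le_poissonKernelSphere (norm_eq_of_mem_sphere y)
          (norm_eq_of_mem_sphere ξ) hδ₀ hδ₁ hyx (mem_ball_iff_norm.1 hξ))
        (hf.integrable.continuous_mul (continuous_poissonKernelSphere hp))

theorem exists_saturating_function (d : ℕ) (C₁ : ℝ)
    (R : ℕ → Finset (sphere (0 : EuclideanSpace ℝ (Fin (d + 1))) 1))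
    (hnest : ∀ N : ℕ, R N ⊆ R (N + 1))
    (hcover : ∀ N : ℕ, ∀ ξ : sphere (0 : EuclideanSpace ℝ (Fin (d + 1))) 1,
      ∃ x ∈ R N, ‖(ξ : EuclideanSpace ℝ (Fin (d + 1))) - x‖ < 2 ^ (-(N : ℝ)))
    (hsep : ∀ N : ℕ, ∀ x ∈ R N, ∀ y ∈ R N, x ≠ y →
      2 ^ (-(N : ℝ)) ≤ ‖(x : EuclideanSpace ℝ (Fin (d + 1))) - y‖)
    (hcard : ∀ N : ℕ, ((R N).card : ℝ) ≤ C₁ * 2 ^ (N * d)) :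
    ∃ C : ℝ, 0 < C ∧
      ∀ n : ℕ, 1 ≤ n →
        ∃ f : sphere (0 : EuclideanSpace ℝ (Fin (d + 1))) 1 → ℝ,
          Integrable f (sphereMeasure d) ∧ (∀ ξ, 0 ≤ f ξ) ∧
          (∫ ξ, f ξ ∂(sphereMeasure d)) = 1 ∧
          ∀ α : ℝ, 1 < α →
            ∀ y : sphere (0 : EuclideanSpace ℝ (Fin (d + 1))) 1,
              (∃ x ∈ R (⌊(n : ℝ) / α⌋₊ + 1),
                ‖(y : EuclideanSpace ℝ (Fin (d + 1))) - x‖ < 2 ^ (-(n : ℝ))) →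
              (C / n) * (2:ℝ) ^ (((n : ℝ) - (⌊(n : ℝ) / α⌋₊ + 1)) * d) ≤
                ∫ ξ, poissonKernelSphere d
                      ((1 - (2:ℝ) ^ (-(n : ℝ))) • (y : EuclideanSpace ℝ (Fin (d + 1)))) ξ * f ξ
                    ∂(sphereMeasure d) :=
  exists_saturating_function_general d C₁ R hcover hcard
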